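/- Relative equilibria of the N-body problem are planar: if x(t) = R_ω(t) q is a solution of the N-body problem with exponent α > 0, where R_ω(t) is the rotation by angle ωt about the z-axis applied to each body and q = (q₁,…,q_N) is the initial configuration, then the third coordinates of all bodies are equal, q₁₃ = q₂₃ = ⋯ = q_{N3}, so the motion lies in a fixed plane orthogonal to the rotation axis. -/

import Mathlib

/- STATEMENT 8: relative equilibria of the N-body problem are planar: if
x(t) = R_ω(t) q is a solution, then all third coordinates of q coincide. -/

namespace NBodyPaper

open Real Filter

noncomputable section

abbrev E3 := EuclideanSpace ℝ (Fin 3)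

variable {N : ℕ}

/-- The α-homogeneous potential `U(x) = -∑_{i<j} m_i m_j / |x_i - x_j|^α`. -/
def pot (α : ℝ) (m : Fin N → ℝ) (q : Fin N → E3) : ℝ :=
  -∑ i : Fin N, ∑ j ∈ Finset.univ.filter (fun j => i < j), m i * m j / ‖q i - q j‖ ^ α

def kinetic (m : Fin N → ℝ) (v : Fin N → E3) : ℝ := (1 / 2) * ∑ i, m i * ‖v i‖ ^ 2

/-- Total energy `E(x, ẋ)`. -/
def energy (α : ℝ) (m : Fin N → ℝ) (q v : Fin N → E3) : ℝ := kinetic m v + pot α m q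

/-- Moment of inertia `I(x) = ∑ m_i |x_i|²`. -/
def inertia (m : Fin N → ℝ) (q : Fin N → E3) : ℝ := ∑ i, m i * ‖q i‖ ^ 2

/-- `ẍ_i = -∇_i U / m_i = -α ∑_{j≠i} m_j (x_i - x_j)/|x_i - x_j|^{α+2}`. -/
def accel (α : ℝ) (m : Fin N → ℝ) (q : Fin N → E3) (i : Fin N) : E3 :=
  (-α) • ∑ j ∈ Finset.univ.erase i, (m j / ‖q i - q j‖ ^ (α + 2)) • (q i - q j)

/-- Collision-free configuration. -/
def OffDiag (q : Fin N → E3) : Prop := ∀ i j, i ≠ j → q i ≠ q j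

/-- The time interval `[0, σ)` for `σ ∈ (0, ∞]`. -/
def Dom (σ : EReal) : Set ℝ := {t : ℝ | 0 ≤ t ∧ (t : EReal) < σ}

/-- `x` (with velocity `v`) solves the N-body equations on the set `s`. -/
def IsSolnOn (α : ℝ) (m : Fin N → ℝ) (x v : ℝ → Fin N → E3) (s : Set ℝ) : Prop :=
  ∀ t ∈ s, OffDiag (x t) ∧
    ∀ i, HasDerivAt (fun τ => x τ i) (v t i) t ∧ HasDerivAt (fun τ => v τ i) (accel α m (x t) i) t

/-- `x` is a solution on its maximal interval of existence `[0, σ)`: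
it solves the equations there and no solution extends it to a longer interval. -/
def IsMaxSoln (α : ℝ) (m : Fin N → ℝ) (σ : EReal) (x v : ℝ → Fin N → E3) : Prop :=
  0 < σ ∧ IsSolnOn α m x v (Dom σ) ∧
    ∀ (σ' : EReal) (x' v' : ℝ → Fin N → E3), IsSolnOn α m x' v' (Dom σ') →
      (∀ t ∈ Dom σ, x' t = x t ∧ v' t = v t) → σ' ≤ σ

/-- Rotation with frequency `ω` about the z-axis, applied to a point of `ℝ³`. -/
def rotZ (ω t : ℝ) (a : E3) : E3 :=
  (WithLp.equiv 2 (Fin 3 → ℝ)).symm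
    ![Real.cos (ω * t) * a 0 - Real.sin (ω * t) * a 1,
      Real.sin (ω * t) * a 0 + Real.cos (ω * t) * a 1,
      a 2]

/-- **Relative equilibria are planar**: if `x(t) = R_ω(t) q` is a solution of the N-body
problem, then the third coordinates of all the bodies are equal, so the motion lies in a
fixed plane orthogonal to the rotation axis. -/
theorem relative_equilibrium_planar {N : ℕ} (α : ℝ) (hα : 0 < α)
    (m : Fin N → ℝ) (hm : ∀ i, 0 < m i) (ω : ℝ)
    (q : Fin N → E3) (x v : ℝ → Fin N → E3)
    (hxq : x = fun t i => rotZ ω t (q i))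
    (hsol : IsSolnOn α m x v Set.univ) :
    ∀ i j, q i 2 = q j 2 := by
  -- third coordinate of x is constant
  have hx2 : ∀ t i, x t i 2 = q i 2 := by
    intro t i
    simp only [hxq]
    rfl
  -- x 0 = q
  have hx0 : x 0 = q := by
    funext i
    apply PiLp.ext
    intro k
    fin_cases k <;> simp only [hxq] <;>
      simp [rotZ, WithLp.equiv, Equiv.refl_apply] <;> rfl
  -- v's third coordinate is zero
  have hv2 : ∀ t i, v t i 2 = 0 := by
    intro t i
    have h1 := ((hsol t trivial).2 i).1
    have hp := (EuclideanSpace.proj (2 : Fin 3)).hasFDerivAt.comp_hasDerivAt t h1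
    have hp' : HasDerivAt (fun τ => x τ i 2) (v t i 2) t := hp
    have heq : (fun τ => x τ i 2) = fun _ => q i 2 := funext fun τ => hx2 τ i
    rw [heq] at hp'
    exact hp'.unique (hasDerivAt_const t (q i 2))
  -- accel's third coordinate is zero
  have ha2 : ∀ i, accel α m (x 0) i 2 = 0 := by
    intro i
    have h2 := ((hsol 0 trivial).2 i).2
    have hp := (EuclideanSpace.proj (2 : Fin 3)).hasFDerivAt.comp_hasDerivAt 0 h2
    have hp' : HasDerivAt (fun τ => v τ i 2) (accel α m (x 0) i 2) 0 := hp
    have heq : (fun τ => v τ i 2) = fun _ => (0 : ℝ) := funext fun τ => hv2 τ i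
    rw [heq] at hp'
    exact hp'.unique (hasDerivAt_const 0 0)
  have hod : OffDiag q := hx0 ▸ (hsol 0 trivial).1
  -- the key sum equation
  have hsum : ∀ i, ∑ j ∈ Finset.univ.erase i,
      (m j / ‖q i - q j‖ ^ (α + 2)) * (q i 2 - q j 2) = 0 := by
    intro i
    have h := ha2 i
    rw [hx0] at h
    have hproj : accel α m q i 2 = EuclideanSpace.proj (2 : Fin 3) (accel α m q i) := rfl
    rw [hproj] at h
    simp only [accel, map_smul, map_sum, map_sub, smul_eq_mul,
      PiLp.proj_apply, neg_mul, neg_eq_zero] at h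
    rcases mul_eq_zero.1 h with h' | h'
    · exact absurd h' (ne_of_gt hα)
    · exact h'
  -- pick a maximizer
  intro i j
  obtain ⟨i0, -, hi0⟩ := Finset.exists_max_image Finset.univ (fun k => q k 2)
    ⟨i, Finset.mem_univ i⟩
  have key : ∀ k, q k 2 = q i0 2 := by
    intro k
    by_cases hk : k = i0
    · rw [hk]
    · have hmem : k ∈ Finset.univ.erase i0 := Finset.mem_erase.2 ⟨hk, Finset.mem_univ k⟩
      have hnonneg : ∀ l ∈ Finset.univ.erase i0,
          0 ≤ (m l / ‖q i0 - q l‖ ^ (α + 2)) * (q i0 2 - q l 2) := by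
        intro l hl
        have hl' : l ≠ i0 := (Finset.mem_erase.1 hl).1
        have hpos : (0:ℝ) < ‖q i0 - q l‖ ^ (α + 2) := by
          apply Real.rpow_pos_of_pos
          rw [norm_pos_iff, sub_ne_zero]
          exact hod i0 l (Ne.symm hl')
        exact mul_nonneg (le_of_lt (div_pos (hm l) hpos))
          (sub_nonneg.2 (hi0 l (Finset.mem_univ l)))
      have hzero := (Finset.sum_eq_zero_iff_of_nonneg hnonneg).1 (hsum i0) k hmem
      have hpos : (0:ℝ) < m k / ‖q i0 - q k‖ ^ (α + 2) := by
        apply div_pos (hm k)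
        apply Real.rpow_pos_of_pos
        rw [norm_pos_iff, sub_ne_zero]
        exact hod i0 k (Ne.symm hk)
      rcases mul_eq_zero.1 hzero with h | h
      · exact absurd h (ne_of_gt hpos)
      · linarith [sub_eq_zero.1 h]
  rw [key i, key j]

end
end NBodyPaper
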